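/- Let k > 0 and α ∈ ℝ² with |αₙ| ≠ k for all n ∈ ℤ². There exist constants C₁ > 0 and C₂ > 0, depending only on k and α, such that for every sequence (Ẽₙ)_{n∈ℤ²} ⊂ ℂ³ of tangential vectors (e₃·Ẽₙ = 0) with Σₙ (1+|αₙ|²)^{−1/2}(|Ẽₙ|² + |αₙ·Ẽₙ|²) < ∞, the pairing ⟨RẼ,Ẽ⟩ := 4π² Σ_{n∈ℤ²} R̂ₙ · conj(Ẽₙ), with R̂ₙ = −(1/(iβₙ))[k²Ẽₙ − (αₙ·Ẽₙ)αₙ], satisfies the Gårding-type inequality −Re ⟨RẼ,Ẽ⟩ ≥ C₁ Σ_{n∈ℤ²} (1+|αₙ|²)^{−1/2} |αₙ·Ẽₙ|² − C₂ Σ_{n∈ℤ²} (1+|αₙ|²)^{−1/2} |Ẽₙ|². -/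

import Mathlib

open scoped Real

/-- `|αₙ|` for `αₙ = (α₁+n₁, α₂+n₂, 0)`. -/
noncomputable def alphaNorm (α : ℝ × ℝ) (n : ℤ × ℤ) : ℝ :=
  Real.sqrt ((α.1 + (n.1 : ℝ))^2 + (α.2 + (n.2 : ℝ))^2)

/-- The vector `αₙ = (α₁+n₁, α₂+n₂, 0)` viewed in `ℂ³`. -/
noncomputable def alphaVec (α : ℝ × ℝ) (n : ℤ × ℤ) : Fin 3 → ℂ :=
  ![((α.1 + (n.1 : ℝ) : ℝ) : ℂ), ((α.2 + (n.2 : ℝ) : ℝ) : ℂ), 0]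

/-- The vertical wavenumbers `βₙ` of the Rayleigh expansion:
`βₙ = (k² − |αₙ|²)^{1/2}` if `|αₙ| < k` and `βₙ = i(|αₙ|² − k²)^{1/2}` if `|αₙ| > k`. -/
noncomputable def betaN (k : ℝ) (α : ℝ × ℝ) (n : ℤ × ℤ) : ℂ :=
  if alphaNorm α n < k then (Real.sqrt (k^2 - (alphaNorm α n)^2) : ℂ)
  else Complex.I * (Real.sqrt ((alphaNorm α n)^2 - k^2) : ℂ)

/-- Bilinear dot product on `ℂ³` (no conjugation). -/
def cdot (a b : Fin 3 → ℂ) : ℂ := a 0 * b 0 + a 1 * b 1 + a 2 * b 2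

/-- Hermitian pairing `a · conj b` on `ℂ³`. -/
noncomputable def hpair (a b : Fin 3 → ℂ) : ℂ := ∑ j : Fin 3, a j * (starRingEnd ℂ) (b j)

/-- Squared Euclidean norm `|v|² = Σⱼ|vⱼ|²` of `v ∈ ℂ³`. -/
noncomputable def enormSq (v : Fin 3 → ℂ) : ℝ := ∑ j : Fin 3, ‖v j‖^2

/-- The Fourier symbol `R̂ₙ = −(1/(iβₙ))[k²Ẽₙ − (αₙ·Ẽₙ)αₙ]` of the transparent
boundary (Dirichlet-to-Neumann) operator `R`. -/
noncomputable def Rsymb (k : ℝ) (α : ℝ × ℝ) (n : ℤ × ℤ) (En : Fin 3 → ℂ) : Fin 3 → ℂ :=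
  fun j => -(1 / (Complex.I * betaN k α n)) *
    ((k : ℂ)^2 * En j - cdot (alphaVec α n) En * alphaVec α n j)

/-- The Sobolev weight `(1+|αₙ|²)^{−1/2}`. -/
noncomputable def sw (α : ℝ × ℝ) (n : ℤ × ℤ) : ℝ := 1 / Real.sqrt (1 + (alphaNorm α n)^2)

/-!
Because `αₙ` is real, `R̂ₙ · conj Ẽₙ = −(iβₙ)⁻¹ (k²|Ẽₙ|² − |αₙ·Ẽₙ|²)`. On the finitely many
propagating modes `βₙ` is real, so this is purely imaginary; on the evanescent modes
`βₙ = i|βₙ|` and its real part is `(k²|Ẽₙ|² − |αₙ·Ẽₙ|²)/|βₙ|`. Since `|βₙ|² = |αₙ|² − k²` is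
comparable to `1 + |αₙ|²` for all but finitely many `n`, `|βₙ|⁻¹ ≤ C (1+|αₙ|²)^{−1/2}`, while
always `|βₙ| ≤ (1+|αₙ|²)^{1/2}` on evanescent modes. This gives the inequality mode by mode with
`C₁ = 4π²`, `C₂ = 4π²k²C` (on the other modes `|αₙ·Ẽₙ| ≤ |αₙ||Ẽₙ| ≤ k|Ẽₙ|`), and the same bound
on `|βₙ|⁻¹` makes the pairing absolutely summable.
-/

open Filter

section AlphaNorm

variable (α : ℝ × ℝ) (n : ℤ × ℤ)

lemma alphaNorm_nonneg : 0 ≤ alphaNorm α n := Real.sqrt_nonneg _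

lemma sw_pos : 0 < sw α n := by unfold sw; positivity

lemma enormSq_alphaVec : enormSq (alphaVec α n) = alphaNorm α n ^ 2 := by
  rw [alphaNorm, Real.sq_sqrt (by positivity)]
  simp only [enormSq, alphaVec, Fin.sum_univ_three, Matrix.cons_val, Complex.norm_real,
    Real.norm_eq_abs, sq_abs, norm_zero]
  ring

lemma norm_prod_le_alphaNorm : ‖(α.1 + n.1, α.2 + n.2)‖ ≤ alphaNorm α n := by
  rw [Prod.norm_def, alphaNorm, Real.norm_eq_abs, Real.norm_eq_abs]
  exact max_le (Real.abs_le_sqrt (by nlinarith)) (Real.abs_le_sqrt (by nlinarith))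

lemma tendsto_alphaNorm_cofinite_atTop : Tendsto (alphaNorm α) cofinite atTop := by
  have hcast : Tendsto (fun n : ℤ × ℤ => ((n.1 : ℝ), (n.2 : ℝ))) cofinite (cocompact (ℝ × ℝ)) := by
    rw [← Filter.coprod_cofinite, ← Filter.coprod_cocompact]
    exact Int.tendsto_coe_cofinite.prodMap_coprod Int.tendsto_coe_cofinite
  refine tendsto_atTop_mono (fun n => ?_)
    (tendsto_atTop_add_const_right _ (-‖α‖) (tendsto_norm_cocompact_atTop.comp hcast))
  calc ‖((n.1 : ℝ), (n.2 : ℝ))‖ + -‖α‖ = ‖((n.1 : ℝ), (n.2 : ℝ))‖ - ‖-α‖ := by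
        rw [norm_neg, sub_eq_add_neg]
    _ ≤ ‖((n.1 : ℝ), (n.2 : ℝ)) - -α‖ := norm_sub_norm_le _ _
    _ = ‖(α.1 + n.1, α.2 + n.2)‖ := by
        rw [sub_neg_eq_add, add_comm, Prod.mk_add_mk]
    _ ≤ alphaNorm α n := norm_prod_le_alphaNorm α n

end AlphaNorm

lemma enormSq_nonneg (v : Fin 3 → ℂ) : 0 ≤ enormSq v :=
  Finset.sum_nonneg fun _ _ => sq_nonneg _

lemma norm_cdot_sq_le (a b : Fin 3 → ℂ) : ‖cdot a b‖ ^ 2 ≤ enormSq a * enormSq b := by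
  have htri : ‖cdot a b‖ ≤ ∑ j : Fin 3, ‖a j‖ * ‖b j‖ := by
    simp only [cdot, Fin.sum_univ_three, ← norm_mul]
    exact norm_add₃_le
  calc ‖cdot a b‖ ^ 2 ≤ (∑ j : Fin 3, ‖a j‖ * ‖b j‖) ^ 2 := by gcongr
    _ ≤ enormSq a * enormSq b := Finset.sum_mul_sq_le_sq_mul_sq _ _ _

lemma norm_cdot_alphaVec_sq_le (α : ℝ × ℝ) (n : ℤ × ℤ) (E : Fin 3 → ℂ) :
    ‖cdot (alphaVec α n) E‖ ^ 2 ≤ alphaNorm α n ^ 2 * enormSq E :=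
  enormSq_alphaVec α n ▸ norm_cdot_sq_le _ _

open Complex in
lemma hpair_Rsymb (k : ℝ) (α : ℝ × ℝ) (n : ℤ × ℤ) (E : Fin 3 → ℂ) :
    hpair (Rsymb k α n E) E = -(1 / (I * betaN k α n)) *
      ((k ^ 2 * enormSq E - ‖cdot (alphaVec α n) E‖ ^ 2 : ℝ) : ℂ) := by
  have hself : hpair E E = enormSq E := by
    simp only [hpair, enormSq, Complex.mul_conj, Complex.normSq_eq_norm_sq, ofReal_sum,
      ofReal_pow]
  have halpha : hpair (alphaVec α n) E = starRingEnd ℂ (cdot (alphaVec α n) E) := by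
    simp [hpair, cdot, alphaVec, Fin.sum_univ_three]
  calc hpair (Rsymb k α n E) E = -(1 / (I * betaN k α n)) *
        ((k : ℂ) ^ 2 * hpair E E - cdot (alphaVec α n) E * hpair (alphaVec α n) E) := by
        simp only [hpair, Rsymb, Fin.sum_univ_three]
        ring
    _ = _ := by
        rw [hself, halpha, Complex.mul_conj, Complex.normSq_eq_norm_sq]
        push_cast
        ring

lemma betaN_of_sq_lt {k : ℝ} {α : ℝ × ℝ} {n : ℤ × ℤ} (h : k ^ 2 < alphaNorm α n ^ 2) :
    betaN k α n = Complex.I * Real.sqrt (alphaNorm α n ^ 2 - k ^ 2) := by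
  have : ¬ alphaNorm α n < k := fun hlt => by nlinarith [alphaNorm_nonneg α n]
  rw [betaN, if_neg this]

lemma norm_betaN_of_sq_lt {k : ℝ} {α : ℝ × ℝ} {n : ℤ × ℤ} (h : k ^ 2 < alphaNorm α n ^ 2) :
    ‖betaN k α n‖ = Real.sqrt (alphaNorm α n ^ 2 - k ^ 2) := by
  rw [betaN_of_sq_lt h, norm_mul, Complex.norm_I, one_mul, Complex.norm_real,
    Real.norm_of_nonneg (Real.sqrt_nonneg _)]

open Complex in
lemma re_hpair_Rsymb (k : ℝ) (α : ℝ × ℝ) (n : ℤ × ℤ) (E : Fin 3 → ℂ) :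
    (hpair (Rsymb k α n E) E).re =
      if k ^ 2 < alphaNorm α n ^ 2 then
        (k ^ 2 * enormSq E - ‖cdot (alphaVec α n) E‖ ^ 2) / Real.sqrt (alphaNorm α n ^ 2 - k ^ 2)
      else 0 := by
  rw [hpair_Rsymb]
  set A := k ^ 2 * enormSq E - ‖cdot (alphaVec α n) E‖ ^ 2
  split_ifs with h
  · rw [betaN_of_sq_lt h, ← mul_assoc, I_mul_I, neg_one_mul, div_neg, neg_neg, ← ofReal_one,
      ← ofReal_div, ← ofReal_mul, ofReal_re, one_div_mul_eq_div]
  · by_cases hprop : alphaNorm α n < k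
    · rw [betaN, if_pos hprop]
      simp
    · -- a Wood anomaly: `βₙ = 0`, and Lean's `1 / 0 = 0`
      have : Real.sqrt (alphaNorm α n ^ 2 - k ^ 2) = 0 := Real.sqrt_eq_zero'.2 (by linarith)
      simp [betaN, hprop, this]

lemma exists_inv_norm_betaN_le (k : ℝ) (α : ℝ × ℝ) :
    ∃ C, 1 ≤ C ∧ ∀ n, ‖betaN k α n‖⁻¹ ≤ C * sw α n := by
  set q : ℤ × ℤ → ℝ := fun n => Real.sqrt (1 + alphaNorm α n ^ 2) * ‖betaN k α n‖⁻¹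
  have hev : ∀ᶠ n in cofinite, q n ≤ Real.sqrt 2 := by
    filter_upwards [(tendsto_alphaNorm_cofinite_atTop α).eventually_ge_atTop (1 + 2 * k ^ 2)]
      with n hn
    have hsq : 1 + 2 * k ^ 2 ≤ alphaNorm α n ^ 2 := by nlinarith
    have hb : 0 < Real.sqrt (alphaNorm α n ^ 2 - k ^ 2) := Real.sqrt_pos.2 (by nlinarith)
    have hnorm := norm_betaN_of_sq_lt (k := k) (α := α) (n := n) (by nlinarith)
    rw [show q n = Real.sqrt (1 + alphaNorm α n ^ 2) * ‖betaN k α n‖⁻¹ from rfl, hnorm,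
      ← div_eq_mul_inv, div_le_iff₀ hb, ← Real.sqrt_mul zero_le_two]
    exact Real.sqrt_le_sqrt (by nlinarith)
  obtain ⟨C, hC⟩ := (isBoundedUnder_of_eventually_le hev).bddAbove_range_of_cofinite
  refine ⟨max C 1, le_max_right _ _, fun n => ?_⟩
  have hq : ‖betaN k α n‖⁻¹ = q n * sw α n := by
    have : 0 < Real.sqrt (1 + alphaNorm α n ^ 2) := Real.sqrt_pos.2 (by positivity)
    simp only [q, sw]
    field_simp
  rw [hq]
  gcongr
  · exact (sw_pos α n).le
  · exact (hC ⟨n, rfl⟩).trans (le_max_left _ _)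


lemma norm_hpair_Rsymb_le (k : ℝ) (α : ℝ × ℝ) (n : ℤ × ℤ) (E : Fin 3 → ℂ) :
    ‖hpair (Rsymb k α n E) E‖ ≤
      ‖betaN k α n‖⁻¹ * (k ^ 2 * enormSq E + ‖cdot (alphaVec α n) E‖ ^ 2) := by
  rw [hpair_Rsymb, norm_mul, norm_neg, norm_div, norm_one, norm_mul, Complex.norm_I, one_mul,
    one_div, Complex.norm_real, Real.norm_eq_abs]
  gcongr
  refine (abs_sub _ _).trans_eq ?_
  rw [abs_of_nonneg (by have := enormSq_nonneg E; positivity), abs_of_nonneg (by positivity)]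

lemma summable_mul_of_summable_mul_add {ι : Type*} {w f g : ι → ℝ} (hw : 0 ≤ w) (hf : 0 ≤ f)
    (hg : 0 ≤ g) (h : Summable fun i => w i * (f i + g i)) : Summable fun i => w i * f i :=
  h.of_nonneg_of_le (fun i => mul_nonneg (hw i) (hf i))
    fun i => mul_le_mul_of_nonneg_left (le_add_of_nonneg_right (hg i)) (hw i)

section Garding

variable {k : ℝ} {α : ℝ × ℝ} {C : ℝ}

lemma sw_mul_sub_le_neg_re_hpair_Rsymb (hC1 : 1 ≤ C) (n : ℤ × ℤ)
    (hC : ‖betaN k α n‖⁻¹ ≤ C * sw α n) (E : Fin 3 → ℂ) :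
    sw α n * ‖cdot (alphaVec α n) E‖ ^ 2 - k ^ 2 * C * (sw α n * enormSq E)
      ≤ -(hpair (Rsymb k α n E) E).re := by
  have he := enormSq_nonneg E
  have hd := norm_cdot_alphaVec_sq_le α n E
  have hsw := sw_pos α n
  rw [re_hpair_Rsymb]
  split_ifs with h
  · rw [norm_betaN_of_sq_lt h] at hC
    set b := Real.sqrt (alphaNorm α n ^ 2 - k ^ 2)
    have hb : 0 < b := Real.sqrt_pos.2 (by linarith)
    have hsw_le : sw α n ≤ b⁻¹ := by
      rw [sw, one_div]
      exact inv_anti₀ hb (Real.sqrt_le_sqrt (by nlinarith))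
    have h1 : sw α n * ‖cdot (alphaVec α n) E‖ ^ 2 ≤ b⁻¹ * ‖cdot (alphaVec α n) E‖ ^ 2 := by
      gcongr
    have h2 : b⁻¹ * (k ^ 2 * enormSq E) ≤ C * sw α n * (k ^ 2 * enormSq E) := by
      gcongr
    rw [← neg_div, neg_sub, sub_div, div_eq_inv_mul, div_eq_inv_mul]
    linarith
  · have hk : alphaNorm α n ^ 2 * enormSq E ≤ k ^ 2 * enormSq E :=
      mul_le_mul_of_nonneg_right (not_lt.1 h) he
    have hkC : k ^ 2 * enormSq E ≤ k ^ 2 * C * enormSq E := by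
      nlinarith [sq_nonneg k]
    have hdk : ‖cdot (alphaVec α n) E‖ ^ 2 ≤ k ^ 2 * C * enormSq E := hd.trans (hk.trans hkC)
    rw [neg_zero, sub_nonpos, mul_left_comm]
    gcongr

lemma summable_hpair_Rsymb (hC : ∀ n, ‖betaN k α n‖⁻¹ ≤ C * sw α n) {E : ℤ × ℤ → Fin 3 → ℂ}
    (hE : Summable fun n => sw α n * (enormSq (E n) + ‖cdot (alphaVec α n) (E n)‖ ^ 2)) :
    Summable fun n => hpair (Rsymb k α n (E n)) (E n) := by
  refine .of_norm_bounded (hE.mul_left (C * (k ^ 2 + 1))) fun n => ?_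
  have he := enormSq_nonneg (E n)
  have hC0 : 0 ≤ C * sw α n := (inv_nonneg.2 (norm_nonneg _)).trans (hC n)
  calc ‖hpair (Rsymb k α n (E n)) (E n)‖
      ≤ ‖betaN k α n‖⁻¹ * (k ^ 2 * enormSq (E n) + ‖cdot (alphaVec α n) (E n)‖ ^ 2) :=
        norm_hpair_Rsymb_le k α n (E n)
    _ ≤ C * sw α n * ((k ^ 2 + 1) * (enormSq (E n) + ‖cdot (alphaVec α n) (E n)‖ ^ 2)) := by
        gcongr
        · exact hC n
        · nlinarith [sq_nonneg k, sq_nonneg ‖cdot (alphaVec α n) (E n)‖]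
    _ = _ := by ring

end Garding

theorem garding_inequality_general (k : ℝ) (hk : 0 < k) (α : ℝ × ℝ) :
    ∃ C₁ C₂ : ℝ, 0 < C₁ ∧ 0 < C₂ ∧
      ∀ Et : ℤ × ℤ → Fin 3 → ℂ, (∀ n, Et n 2 = 0) →
        (Summable fun n : ℤ × ℤ =>
          sw α n * (enormSq (Et n) + ‖cdot (alphaVec α n) (Et n)‖^2)) →
        C₁ * (∑' n : ℤ × ℤ, sw α n * ‖cdot (alphaVec α n) (Et n)‖^2)
            - C₂ * (∑' n : ℤ × ℤ, sw α n * enormSq (Et n))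
          ≤ -(((4 * (π : ℂ)^2) * ∑' n : ℤ × ℤ, hpair (Rsymb k α n (Et n)) (Et n)).re) := by
  obtain ⟨C, hC1, hC⟩ := exists_inv_norm_betaN_le k α
  refine ⟨4 * π ^ 2, 4 * π ^ 2 * (k ^ 2 * C), by positivity,
    by have := hk; positivity, fun E _ hE => ?_⟩
  have hsw : 0 ≤ sw α := fun n => (sw_pos α n).le
  have he : 0 ≤ fun n => enormSq (E n) := fun n => enormSq_nonneg (E n)
  have hd : 0 ≤ fun n => ‖cdot (alphaVec α n) (E n)‖ ^ 2 := fun n => sq_nonneg _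
  have hnorm := summable_mul_of_summable_mul_add hsw he hd hE
  have hdiv := summable_mul_of_summable_mul_add hsw hd he (by simpa only [add_comm] using hE)
  have hpairing := summable_hpair_Rsymb hC hE
  calc 4 * π ^ 2 * (∑' n, sw α n * ‖cdot (alphaVec α n) (E n)‖ ^ 2)
        - 4 * π ^ 2 * (k ^ 2 * C) * (∑' n, sw α n * enormSq (E n))
      = 4 * π ^ 2 * ∑' n, (sw α n * ‖cdot (alphaVec α n) (E n)‖ ^ 2
          - k ^ 2 * C * (sw α n * enormSq (E n))) := by
        rw [hdiv.tsum_sub (hnorm.mul_left _), tsum_mul_left]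
        ring
    _ ≤ 4 * π ^ 2 * ∑' n, -(hpair (Rsymb k α n (E n)) (E n)).re := by
        refine mul_le_mul_of_nonneg_left ?_ (by positivity)
        exact (hdiv.sub (hnorm.mul_left _)).tsum_le_tsum
          (fun n => sw_mul_sub_le_neg_re_hpair_Rsymb hC1 n (hC n) (E n))
          (Complex.reCLM.summable hpairing).neg
    _ = _ := by
        rw [show 4 * (π : ℂ) ^ 2 = ((4 * π ^ 2 : ℝ) : ℂ) by push_cast; rfl,
          Complex.re_ofReal_mul, Complex.re_tsum hpairing, tsum_neg, mul_neg]

/-- Gårding-type inequality for the transparent boundary operator: there are constants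
`C₁, C₂ > 0` (depending only on `k, α`) such that for every tangential sequence `Ẽ`
with finite `H_t^{-1/2}(div)` norm,
`−Re⟨RẼ,Ẽ⟩ ≥ C₁ Σₙ (1+|αₙ|²)^{−1/2}|αₙ·Ẽₙ|² − C₂ Σₙ (1+|αₙ|²)^{−1/2}|Ẽₙ|²`. -/
theorem garding_inequality (k : ℝ) (hk : 0 < k) (α : ℝ × ℝ)
    (hwood : ∀ n : ℤ × ℤ, alphaNorm α n ≠ k) :
    ∃ C₁ C₂ : ℝ, 0 < C₁ ∧ 0 < C₂ ∧
      ∀ Et : ℤ × ℤ → Fin 3 → ℂ, (∀ n, Et n 2 = 0) →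
        (Summable fun n : ℤ × ℤ =>
          sw α n * (enormSq (Et n) + ‖cdot (alphaVec α n) (Et n)‖^2)) →
        C₁ * (∑' n : ℤ × ℤ, sw α n * ‖cdot (alphaVec α n) (Et n)‖^2)
            - C₂ * (∑' n : ℤ × ℤ, sw α n * enormSq (Et n))
          ≤ -(((4 * (π : ℂ)^2) * ∑' n : ℤ × ℤ, hpair (Rsymb k α n (Et n)) (Et n)).re) :=
  garding_inequality_general k hk α
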